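/- arXiv:1406.0284 — 2 statements merged into one kernel-verified Lean document; each statement's English description precedes it below -/
import Mathlib

section
/- Consider the two-term complex 0 → D/x^n D → D/x^n D → 0 where D is the Weyl algebra C[x,∂] and the map is induced by left multiplication by x^n (i.e., p ↦ x^n p mod x^n D, equivalently the class of [x^n, p]). This map is surjective and its kernel has dimension n^2 over C. -/
/-- The defining relation of the Weyl algebra: ∂·x = x·∂ + 1. -/
inductive WeylRel : FreeAlgebra ℂ (Fin 2) → FreeAlgebra ℂ (Fin 2) → Prop
  | comm : WeylRel (FreeAlgebra.ι ℂ (1 : Fin 2) * FreeAlgebra.ι ℂ (0 : Fin 2))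
      (FreeAlgebra.ι ℂ (0 : Fin 2) * FreeAlgebra.ι ℂ (1 : Fin 2) + 1)

/-- The Weyl algebra ℂ[x,∂]. -/
abbrev Weyl : Type := RingQuot WeylRel

noncomputable def wX : Weyl := RingQuot.mkAlgHom ℂ WeylRel (FreeAlgebra.ι ℂ (0 : Fin 2))

noncomputable def wD : Weyl := RingQuot.mkAlgHom ℂ WeylRel (FreeAlgebra.ι ℂ (1 : Fin 2))

/-- The degree-`j` homogeneous component of the Weyl algebra (deg x = 1, deg ∂ = -1),
spanned by the monomials x^a ∂^b with a - b = j. -/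
noncomputable def Wcomp (j : ℤ) : Submodule ℂ Weyl :=
  Submodule.span ℂ {w | ∃ a b : ℕ, (a : ℤ) - (b : ℤ) = j ∧ w = wX ^ a * wD ^ b}

/-- The left ideal x^n·D, as a ℂ-subspace of the Weyl algebra. -/
noncomputable def WleftIdeal (n : ℕ) : Submodule ℂ Weyl :=
  LinearMap.range (LinearMap.mulLeft ℂ (wX ^ n))


/-- The commutator map p ↦ [x^n, p] = x^n p - p x^n on the Weyl algebra. -/
noncomputable def commMap (n : ℕ) : Weyl →ₗ[ℂ] Weyl :=
  LinearMap.mulLeft ℂ (wX ^ n) - LinearMap.mulRight ℂ (wX ^ n)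

/-!
Right multiplication makes `D ⧸ x^n D` a right `D`-module, and modulo `x^n D` the commutator
`[x^n, p]` is `-p x^n`. Model this module on `V = (ℂ[s]/(s^n))[t]`, with `x` acting by `s + d/dt`
and `∂` by multiplication by `t`: the orbit map `p ↦ 1 · p` sends `x^a ∂^b` to `s^a t^b` and kills
`x^n D`; since the monomials `x^a ∂^b` span `D`, it induces an isomorphism `D ⧸ x^n D ≃ V`, under
which the map of the statement becomes `-(s + d/dt)^n`.

As `s` is nilpotent and commutes with an antiderivative `J`, `s + d/dt = d/dt ∘ (1 + J s)` with
`1 + J s` invertible, so `s + d/dt` is surjective with kernel of dimension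
`dim ker (d/dt) = dim ℂ[s]/(s^n) = n`. A surjective endomorphism `f` maps `ker f^(k+1)` onto
`ker f^k` with kernel `ker f`, so `dim ker f^k = k · dim ker f`; for `f = s + d/dt` and `k = n`
this is `n^2`.
-/

open Polynomial

universe u

section
variable {K : Type*} {M M' : Type u} [DivisionRing K] [AddCommGroup M] [Module K M]
  [AddCommGroup M'] [Module K M']

theorem LinearMap.rank_comap_of_surjective {f : M →ₗ[K] M'} (hf : Function.Surjective f)
    (p : Submodule K M') :
    Module.rank K (p.comap f) = Module.rank K p + Module.rank K (LinearMap.ker f) := by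
  let f' : p.comap f →ₗ[K] p := f.restrict fun _ hx ↦ hx
  have hf' : Function.Surjective f' := fun y ↦ by
    obtain ⟨x, hx⟩ := hf y
    exact ⟨⟨x, by simp [hx]⟩, Subtype.ext hx⟩
  rw [LinearMap.rank_eq_of_surjective hf', LinearMap.ker_restrict,
    (Submodule.comapSubtypeEquivOfLe fun x hx ↦ by simp_all).rank_eq]

theorem LinearMap.rank_ker_pow_of_surjective {f : Module.End K M} (hf : Function.Surjective f)
    (k : ℕ) : Module.rank K (LinearMap.ker (f ^ k)) = k * Module.rank K (LinearMap.ker f) := by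
  induction k with
  | zero => simp [Module.End.one_eq_id]
  | succ k ih =>
    rw [pow_succ, Module.End.mul_eq_comp, LinearMap.ker_comp, rank_comap_of_surjective hf, ih]
    push_cast
    ring

variable {F J N : Module.End K M}

theorem Module.End.exists_isUnit_add_eq_mul (hFJ : F * J = 1) (hJN : Commute J N)
    (hN : IsNilpotent N) : ∃ U : Module.End K M, IsUnit U ∧ F + N = F * U :=
  ⟨1 + J * N, (hJN.isNilpotent_mul_left hN).isUnit_one_add,
    by rw [mul_add, mul_one, ← mul_assoc, hFJ, one_mul]⟩

theorem Module.End.surjective_add_of_isNilpotent (hFJ : F * J = 1) (hJN : Commute J N)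
    (hN : IsNilpotent N) : Function.Surjective (F + N) := by
  obtain ⟨U, hU, hFN⟩ := exists_isUnit_add_eq_mul hFJ hJN hN
  have hF : Function.Surjective F := fun x ↦
    ⟨J x, by rw [← Module.End.mul_apply, hFJ, Module.End.one_apply]⟩
  rw [hFN, Module.End.coe_mul]
  exact hF.comp ((Module.End.isUnit_iff U).1 hU).2

theorem Module.End.rank_ker_add_of_isNilpotent (hFJ : F * J = 1) (hJN : Commute J N)
    (hN : IsNilpotent N) :
    Module.rank K (LinearMap.ker (F + N)) = Module.rank K (LinearMap.ker F) := by
  obtain ⟨U, hU, hFN⟩ := exists_isUnit_add_eq_mul hFJ hJN hN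
  have hUbij := (Module.End.isUnit_iff U).1 hU
  rw [hFN, Module.End.mul_eq_comp, LinearMap.ker_comp, LinearMap.rank_comap_of_surjective hUbij.2,
    LinearMap.ker_eq_bot_of_injective hUbij.1, rank_bot, add_zero]

end

section
variable {A : Type*} [CommRing A] [Algebra ℚ A]

noncomputable def Polynomial.antiderivative : A[X] →ₗ[A] A[X] :=
  lsum fun k ↦ (k + 1 : ℚ)⁻¹ • monomial (k + 1)

theorem Polynomial.derivative_antiderivative (p : A[X]) : derivative (antiderivative p) = p := by
  suffices h : derivative ∘ₗ antiderivative = (LinearMap.id : A[X] →ₗ[A] A[X]) from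
    LinearMap.congr_fun h p
  refine lhom_ext' fun k ↦ LinearMap.ext fun r ↦ ?_
  have hk : (k + 1 : ℚ)⁻¹ • (r * (k + 1 : A)) = r := by
    rw [show (k + 1 : A) = algebraMap ℚ A (k + 1) by simp, ← Algebra.commutes, ← Algebra.smul_def,
      inv_smul_smul₀ (by positivity)]
  rw [LinearMap.comp_apply, LinearMap.comp_apply, LinearMap.comp_apply, antiderivative, lsum_apply,
    sum_monomial_index _ _ (by simp), LinearMap.smul_apply, derivative_smul, derivative_monomial,
    smul_monomial, Nat.add_sub_cancel, Nat.cast_succ, hk, LinearMap.id_apply]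

end

theorem Polynomial.rank_ker_derivative {K A : Type*} [Field K] [CommRing A] [Algebra K A]
    [IsAddTorsionFree A] :
    Module.rank K (LinearMap.ker ((derivative (R := A)).restrictScalars K)) = Module.rank K A := by
  have hC : LinearMap.ker ((derivative (R := A)).restrictScalars K) =
      LinearMap.range ((monomial 0 : A →ₗ[A] A[X]).restrictScalars K) := by
    ext p
    refine ⟨fun hp ↦ ⟨p.coeff 0, (eq_C_of_derivative_eq_zero hp).symm⟩, ?_⟩
    rintro ⟨r, rfl⟩
    exact derivative_C
  rw [hC]
  exact rank_range_of_injective _ (monomial_injective 0)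

abbrev TruncPoly (n : ℕ) : Type := AdjoinRoot (X ^ n : ℂ[X])

namespace TruncPoly
variable (n : ℕ)

noncomputable def s : TruncPoly n := AdjoinRoot.root _

theorem s_pow : s n ^ n = 0 := by
  simp [s, ← AdjoinRoot.mk_X, ← map_pow, AdjoinRoot.mk_self]

theorem s_pow_of_le {a : ℕ} (h : n ≤ a) : s n ^ a = 0 := pow_eq_zero_of_le h (s_pow n)

noncomputable def powerBasis : PowerBasis ℂ (TruncPoly n) := AdjoinRoot.powerBasis' (monic_X_pow n)

theorem powerBasis_dim : (powerBasis n).dim = n := natDegree_X_pow n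

instance : IsAddTorsionFree (TruncPoly n) := .of_module_rat _

theorem rank_eq : Module.rank ℂ (TruncPoly n) = n := by
  rw [rank_eq_card_basis (powerBasis n).basis, Fintype.card_fin, powerBasis_dim]

end TruncPoly

theorem wD_mul_wX : wD * wX = wX * wD + 1 := by
  simpa [wX, wD] using RingQuot.mkAlgHom_rel ℂ WeylRel.comm

theorem span_monomials :
    Submodule.span ℂ (Set.range fun ab : ℕ × ℕ ↦ wX ^ ab.1 * wD ^ ab.2) = ⊤ := by
  set S := Submodule.span ℂ (Set.range fun ab : ℕ × ℕ ↦ wX ^ ab.1 * wD ^ ab.2)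
  have mem (a b : ℕ) : wX ^ a * wD ^ b ∈ S := Submodule.subset_span ⟨(a, b), rfl⟩
  have closed (c : Weyl) (hc : ∀ a b, c * (wX ^ a * wD ^ b) ∈ S) : ∀ s ∈ S, c * s ∈ S :=
    fun _ hs ↦ (Submodule.span_le (p := S.comap (LinearMap.mulLeft ℂ c))).2
      (by rintro _ ⟨⟨a, b⟩, rfl⟩; exact hc a b) hs
  have wX_mul : ∀ s ∈ S, wX * s ∈ S :=
    closed wX fun a b ↦ by rw [← mul_assoc, ← pow_succ']; exact mem _ _
  have wD_mul : ∀ s ∈ S, wD * s ∈ S := closed wD fun a b ↦ by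
    induction a with
    | zero => rw [pow_zero, one_mul, ← pow_succ']; simpa using mem 0 (b + 1)
    | succ a ih =>
      rw [pow_succ', mul_assoc, ← mul_assoc, wD_mul_wX, add_mul, one_mul, mul_assoc]
      exact S.add_mem (wX_mul _ ih) (mem a b)
  have mul_mem (z : Weyl) : ∀ s ∈ S, z * s ∈ S := by
    obtain ⟨w, rfl⟩ := RingQuot.mkAlgHom_surjective ℂ WeylRel z
    induction w using FreeAlgebra.induction with
    | grade0 r => intro s hs; simpa [Algebra.smul_def] using S.smul_mem r hs
    | grade1 i =>
      fin_cases i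
      exacts [wX_mul, wD_mul]
    | mul x y hx hy => intro s hs; rw [map_mul, mul_assoc]; exact hx _ (hy s hs)
    | add x y hx hy => intro s hs; rw [map_add, add_mul]; exact S.add_mem (hx s hs) (hy s hs)
  exact eq_top_iff.2 fun z _ ↦ by simpa using mul_mem z 1 (by simpa using mem 0 0)

namespace WeylModel
variable (n : ℕ)

-- `(TruncPoly n)[X]` is `(ℂ[s]/(s^n))[t]` with `t = X`.

noncomputable def opX : Module.End ℂ (TruncPoly n)[X] :=
  LinearMap.mulLeft ℂ (C (TruncPoly.s n)) + (derivative (R := TruncPoly n)).restrictScalars ℂ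

noncomputable def opD : Module.End ℂ (TruncPoly n)[X] := LinearMap.mulLeft ℂ X

theorem opX_apply (p : (TruncPoly n)[X]) : opX n p = C (TruncPoly.s n) * p + derivative p := rfl

theorem opX_mul_opD : opX n * opD n = opD n * opX n + 1 := by
  ext1 p
  simp only [Module.End.mul_apply, LinearMap.add_apply, Module.End.one_apply, opX_apply, opD,
    LinearMap.mulLeft_apply, derivative_mul, derivative_X]
  ring

open MulOpposite in
noncomputable def rightAction : Weyl →ₐ[ℂ] (Module.End ℂ (TruncPoly n)[X])ᵐᵒᵖ :=
  RingQuot.liftAlgHom ℂ ⟨FreeAlgebra.lift ℂ ![op (opX n), op (opD n)], by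
    rintro _ _ ⟨⟩
    simp [← op_mul, opX_mul_opD]⟩

theorem rightAction_wX : rightAction n wX = .op (opX n) := by
  simp [rightAction, wX]

theorem rightAction_wD : rightAction n wD = .op (opD n) := by
  simp [rightAction, wD]

noncomputable def toModel : Weyl →ₗ[ℂ] (TruncPoly n)[X] :=
  LinearMap.applyₗ 1 ∘ₗ (MulOpposite.opLinearEquiv ℂ).symm.toLinearMap ∘ₗ
    (rightAction n).toLinearMap

theorem toModel_apply (p : Weyl) : toModel n p = (rightAction n p).unop 1 := rfl

theorem toModel_mul (p q : Weyl) : toModel n (p * q) = (rightAction n q).unop (toModel n p) := by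
  simp [toModel_apply]

theorem opX_pow_one (a : ℕ) : (opX n ^ a) 1 = C (TruncPoly.s n ^ a) := by
  induction a with
  | zero => simp
  | succ a ih =>
    rw [pow_succ', Module.End.mul_apply, ih, opX_apply, derivative_C, add_zero, ← C_mul,
      ← pow_succ']

theorem toModel_monomial (a b : ℕ) :
    toModel n (wX ^ a * wD ^ b) = C (TruncPoly.s n ^ a) * X ^ b := by
  rw [toModel_mul, map_pow, rightAction_wD, ← MulOpposite.op_pow, MulOpposite.unop_op, opD,
    LinearMap.pow_mulLeft, LinearMap.mulLeft_apply, mul_comm, toModel_apply, map_pow,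
    rightAction_wX, ← MulOpposite.op_pow, MulOpposite.unop_op, opX_pow_one]

theorem toModel_wX_pow_mul (p : Weyl) : toModel n (wX ^ n * p) = 0 := by
  rw [toModel_mul, ← mul_one (wX ^ n), ← pow_zero wD, toModel_monomial, TruncPoly.s_pow, map_zero,
    zero_mul, map_zero]

theorem toModel_commMap (p : Weyl) : toModel n (commMap n p) = -(opX n ^ n) (toModel n p) := by
  rw [commMap, LinearMap.sub_apply, LinearMap.mulLeft_apply, LinearMap.mulRight_apply, map_sub,
    toModel_wX_pow_mul, toModel_mul, map_pow, rightAction_wX, ← MulOpposite.op_pow,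
    MulOpposite.unop_op, zero_sub]

noncomputable def basis : Module.Basis (Fin (TruncPoly.powerBasis n).dim × ℕ) ℂ (TruncPoly n)[X] :=
  (TruncPoly.powerBasis n).basis.smulTower (basisMonomials (TruncPoly n))

theorem basis_apply (i : Fin (TruncPoly.powerBasis n).dim) (b : ℕ) :
    basis n (i, b) = C (TruncPoly.s n ^ (i : ℕ)) * X ^ b := by
  rw [basis, Module.Basis.smulTower_apply, PowerBasis.coe_basis, coe_basisMonomials]
  simp only [TruncPoly.powerBasis, AdjoinRoot.powerBasis'_gen]
  rw [smul_monomial, smul_eq_mul, mul_one, C_mul_X_pow_eq_monomial, TruncPoly.s]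

theorem monomial_mem_wleftIdeal {a : ℕ} (b : ℕ) (h : n ≤ a) : wX ^ a * wD ^ b ∈ WleftIdeal n :=
  ⟨wX ^ (a - n) * wD ^ b, by
    rw [LinearMap.mulLeft_apply, ← mul_assoc, ← pow_add, Nat.add_sub_cancel' h]⟩

theorem wleftIdeal_le_ker_toModel : WleftIdeal n ≤ LinearMap.ker (toModel n) := by
  rintro _ ⟨q, rfl⟩
  exact toModel_wX_pow_mul n q

noncomputable def quotientEquiv : (Weyl ⧸ WleftIdeal n) ≃ₗ[ℂ] (TruncPoly n)[X] :=
  LinearEquiv.ofLinearMap ((WleftIdeal n).liftQ (toModel n) (wleftIdeal_le_ker_toModel n))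
    ((basis n).constr ℂ fun ib ↦ (WleftIdeal n).mkQ (wX ^ (ib.1 : ℕ) * wD ^ ib.2))
    ((basis n).ext fun ⟨i, b⟩ ↦ by
      rw [LinearMap.comp_apply, Module.Basis.constr_basis, Submodule.mkQ_apply,
        Submodule.liftQ_apply, toModel_monomial, basis_apply, LinearMap.id_apply])
    (by
      refine Submodule.linearMap_qext _ (LinearMap.ext_on_range span_monomials fun ⟨a, b⟩ ↦ ?_)
      simp only [LinearMap.comp_apply, Submodule.mkQ_apply, Submodule.liftQ_apply,
        toModel_monomial, LinearMap.id_apply]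
      rcases lt_or_ge a n with h | h
      · have ha : a < (TruncPoly.powerBasis n).dim := (TruncPoly.powerBasis_dim n).symm ▸ h
        rw [← basis_apply n ⟨a, ha⟩ b, Module.Basis.constr_basis]
      · rw [TruncPoly.s_pow_of_le n h, C_0, zero_mul, map_zero, eq_comm,
          Submodule.Quotient.mk_eq_zero]
        exact monomial_mem_wleftIdeal n b h)

theorem surjective_opX_and_rank_ker_opX :
    Function.Surjective (opX n) ∧ Module.rank ℂ (LinearMap.ker (opX n)) = n := by
  set F := (derivative (R := TruncPoly n)).restrictScalars ℂ
  set J := (antiderivative (A := TruncPoly n)).restrictScalars ℂ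
  set N := LinearMap.mulLeft ℂ (C (TruncPoly.s n))
  have hFJ : F * J = 1 := LinearMap.ext derivative_antiderivative
  have hJN : Commute J N := LinearMap.ext fun p ↦ by simp [J, N, ← smul_eq_C_mul]
  have hN : IsNilpotent N := ⟨n, by
    rw [LinearMap.pow_mulLeft, ← C_pow, TruncPoly.s_pow, C_0, LinearMap.mulLeft_zero_eq_zero]⟩
  rw [opX, add_comm]
  exact ⟨Module.End.surjective_add_of_isNilpotent hFJ hJN hN, by
    rw [Module.End.rank_ker_add_of_isNilpotent hFJ hJN hN, rank_ker_derivative, TruncPoly.rank_eq]⟩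

theorem wleftIdeal_le_comap_commMap : WleftIdeal n ≤ (WleftIdeal n).comap (commMap n) := by
  rintro _ ⟨q, rfl⟩
  exact ⟨wX ^ n * q - q * wX ^ n, by simp [commMap, mul_sub, mul_assoc]⟩

noncomputable def commMapQ : Module.End ℂ (Weyl ⧸ WleftIdeal n) :=
  (WleftIdeal n).mapQ (WleftIdeal n) (commMap n) (wleftIdeal_le_comap_commMap n)

theorem commMapQ_eq :
    commMapQ n =
      (quotientEquiv n).symm.toLinearMap ∘ₗ (-(opX n ^ n)) ∘ₗ (quotientEquiv n).toLinearMap := by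
  refine Submodule.linearMap_qext _ (LinearMap.ext fun p ↦ ?_)
  rw [LinearMap.comp_apply, LinearMap.comp_apply, LinearMap.comp_apply, LinearMap.comp_apply,
    LinearEquiv.coe_coe, LinearEquiv.eq_symm_apply]
  exact toModel_commMap n p

theorem surjective_commMapQ : Function.Surjective (commMapQ n) := by
  have hX : Function.Surjective (opX n ^ n) := by
    rw [Module.End.coe_pow]
    exact (surjective_opX_and_rank_ker_opX n).1.iterate n
  have hnegX : Function.Surjective (-(opX n ^ n)) := fun y ↦ by
    obtain ⟨x, hx⟩ := hX (-y)
    exact ⟨x, by rw [LinearMap.neg_apply, hx, neg_neg]⟩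
  rw [commMapQ_eq]
  exact (quotientEquiv n).symm.surjective.comp (hnegX.comp (quotientEquiv n).surjective)

theorem rank_ker_commMapQ : Module.rank ℂ (LinearMap.ker (commMapQ n)) = ↑(n ^ 2) := by
  rw [commMapQ_eq, LinearEquiv.ker_comp, LinearMap.ker_comp, Submodule.comap_equiv_eq_map_symm,
    LinearEquiv.rank_map_eq, LinearMap.ker_neg,
    LinearMap.rank_ker_pow_of_surjective (surjective_opX_and_rank_ker_opX n).1,
    (surjective_opX_and_rank_ker_opX n).2]
  push_cast
  ring

end WeylModel

open WeylModel in
theorem stmt3_general (n : ℕ) :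
    (∀ q : Weyl ⧸ WleftIdeal n, ∃ p : Weyl, (WleftIdeal n).mkQ (commMap n p) = q) ∧
    Module.finrank ℂ
      (Submodule.map (WleftIdeal n).mkQ (Submodule.comap (commMap n) (WleftIdeal n)))
      = n ^ 2 := by
  refine ⟨fun q ↦ ?_, ?_⟩
  · obtain ⟨m, rfl⟩ := surjective_commMapQ n q
    obtain ⟨p, rfl⟩ := (WleftIdeal n).mkQ_surjective m
    exact ⟨p, rfl⟩
  · rw [← Submodule.ker_mapQ _ _ _ (wleftIdeal_le_comap_commMap n)]
    exact Module.finrank_eq_of_rank_eq (rank_ker_commMapQ n)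

theorem stmt3 (n : ℕ) (hn : 1 ≤ n) :
    (∀ q : Weyl ⧸ WleftIdeal n, ∃ p : Weyl, (WleftIdeal n).mkQ (commMap n p) = q) ∧
    Module.finrank ℂ
      (Submodule.map (WleftIdeal n).mkQ (Submodule.comap (commMap n) (WleftIdeal n)))
      = n ^ 2 :=
  stmt3_general n
end

section
/- Let â be the infinite Heisenberg Lie algebra with basis {a_n, b_n : n ∈ Z, C} and relations [a_n, b_m] = δ_{n,-m}C (all other brackets of basis elements zero, C central). Let M be an â-module on which C acts as the identity and on which a_n, b_n act locally nilpotently for n > 0 and a_n m = b_n m = 0 for n sufficiently large (depending on m). Define Sing M = {m ∈ M : a_n m = b_n m = 0 for all n > 0}. If M ≠ 0 then Sing M ≠ 0. -/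
open Classical in
/-- For a locally nilpotent operator, find a maximal nonzero iterate. -/
lemma kill_aux {M : Type} [AddCommGroup M] [Module ℂ M]
    (T : Module.End ℂ M) (m : M) (hm : m ≠ 0) (h : ∃ K : ℕ, (T ^ K) m = 0) :
    ∃ k : ℕ, (T ^ k) m ≠ 0 ∧ T ((T ^ k) m) = 0 := by
  classical
  have hK := Nat.find_spec h
  set K := Nat.find h with hKdef
  have hK0 : K ≠ 0 := by
    intro h0
    rw [h0, pow_zero] at hK
    exact hm hK
  refine ⟨K - 1, ?_, ?_⟩
  · exact Nat.find_min h (Nat.sub_lt (Nat.pos_of_ne_zero hK0) one_pos)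
  · have : T ((T ^ (K - 1)) m) = (T ^ K) m := by
      rw [← Module.End.mul_apply, ← pow_succ', Nat.sub_add_cancel (Nat.one_le_iff_ne_zero.2 hK0)]
    rw [this, hK]

theorem stmt7 (M : Type) [AddCommGroup M] [Module ℂ M]
    (A B : ℤ → Module.End ℂ M)
    -- the Heisenberg relations, with C acting as the identity
    (hab : ∀ n m : ℤ, A n * B m - B m * A n = if m = -n then 1 else 0)
    (haa : ∀ n m : ℤ, A n * A m = A m * A n)
    (hbb : ∀ n m : ℤ, B n * B m = B m * B n)
    -- local nilpotence of the positively-indexed operators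
    (hnil : ∀ (m : M) (n : ℤ), 0 < n → ∃ N : ℕ, ((A n) ^ N) m = 0 ∧ ((B n) ^ N) m = 0)
    -- each vector is killed by a_n, b_n for n sufficiently large
    (hbdd : ∀ m : M, ∃ N : ℤ, ∀ n : ℤ, N ≤ n → A n m = 0 ∧ B n m = 0)
    -- M is nonzero
    (hM : ∃ m : M, m ≠ 0) :
    ∃ m : M, m ≠ 0 ∧ ∀ n : ℤ, 0 < n → A n m = 0 ∧ B n m = 0 := by
  -- A n commutes with B p whenever p ≠ -n
  have hAB : ∀ n p : ℤ, p ≠ -n → Commute (A n) (B p) := by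
    intro n p hp
    have := hab n p
    rw [if_neg hp, sub_eq_zero] at this
    exact this
  -- main induction
  have key : ∀ N : ℕ, ∀ m : M, m ≠ 0 →
      (∀ n : ℤ, (N : ℤ) < n → A n m = 0 ∧ B n m = 0) →
      ∃ m' : M, m' ≠ 0 ∧ ∀ n : ℤ, 0 < n → A n m' = 0 ∧ B n m' = 0 := by
    intro N
    induction N with
    | zero => intro m hm h; exact ⟨m, hm, fun n hn => h n (by exact_mod_cast hn)⟩
    | succ N ih =>
      intro m hm h
      set n : ℤ := (N : ℤ) + 1 with hn
      have hnpos : 0 < n := by positivity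
      have hnne : n ≠ -n := by omega
      have hABn : Commute (A n) (B n) := hAB n n (by omega)
      -- kill B n first
      obtain ⟨K1, hK1⟩ := hnil m n hnpos
      obtain ⟨k1, hk1ne, hk1z⟩ := kill_aux (B n) m hm ⟨K1, hK1.2⟩
      set m1 : M := ((B n) ^ k1) m with hm1
      -- then kill A n
      obtain ⟨K2, hK2⟩ := hnil m1 n hnpos
      obtain ⟨k2, hk2ne, hk2z⟩ := kill_aux (A n) m1 hk1ne ⟨K2, hK2.1⟩
      set m' : M := ((A n) ^ k2) m1 with hm'
      refine ih m' hk2ne ?_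
      intro p hp
      rcases eq_or_lt_of_le (show n ≤ p by omega) with hpn | hpn
      · -- p = n
        rw [← hpn]
        constructor
        · exact hk2z
        · -- B n m' = A n ^ k2 (B n m1) = 0
          have hc : B n * A n ^ k2 = A n ^ k2 * B n := (hABn.symm.pow_right k2).eq
          have : B n m' = (A n ^ k2) (B n m1) := by
            show (B n * A n ^ k2) m1 = _
            rw [hc]; rfl
          rw [this, hk1z, map_zero]
      · -- p > n : A p and B p commute with A n, B n and kill m
        have hpN : (↑N : ℤ) < p := by omega
        have cAA : Commute (A p) (A n) := haa p n
        have cAB : Commute (A p) (B n) := hAB p n (by omega)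
        have cBA : Commute (B p) (A n) := (hAB n p (by omega)).symm
        have cBB : Commute (B p) (B n) := hbb p n
        have hApm : A p m = 0 := (h p (by omega)).1
        have hBpm : B p m = 0 := (h p (by omega)).2
        constructor
        · have hc : A p * (A n ^ k2 * B n ^ k1) = (A n ^ k2 * B n ^ k1) * A p :=
            ((cAA.pow_right k2).mul_right (cAB.pow_right k1)).eq
          have : A p m' = (A n ^ k2 * B n ^ k1) (A p m) := by
            show (A p * (A n ^ k2 * B n ^ k1)) m = _
            rw [hc]; rfl
          rw [this, hApm, map_zero]
        · have hc : B p * (A n ^ k2 * B n ^ k1) = (A n ^ k2 * B n ^ k1) * B p :=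
            ((cBA.pow_right k2).mul_right (cBB.pow_right k1)).eq
          have : B p m' = (A n ^ k2 * B n ^ k1) (B p m) := by
            show (B p * (A n ^ k2 * B n ^ k1)) m = _
            rw [hc]; rfl
          rw [this, hBpm, map_zero]
  obtain ⟨m, hm⟩ := hM
  obtain ⟨N0, hN0⟩ := hbdd m
  exact key (max N0 1).toNat m hm (fun p hp => hN0 p (by omega))
end
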